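/- arXiv:1007.0528 — 7 statements merged into one kernel-verified Lean document; each statement's English description precedes it below -/
import Mathlib

section
/- There exist binary random variables x1, x2 that are correlated but cannot be written as OR mixtures of any collection of independent binary random variables. Concretely: let y1, y2 be independent with P(y1=1)=p, P(y2=1)=q, p,q ∉ {0, 1/2, 1}, and set x1 = y1, x2 = y1 XOR y2. Then x1 and x2 are correlated, and there is no pair of (possibly constant) independent binary sources z1, z2 and binary coefficients g_ij with x1 = (g11∧z1)∨(g12∧z2) and x2 = (g21∧z1)∨(g22∧z2) holding almost surely. -/
open MeasureTheory ProbabilityTheory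

private lemma ae_contra' {Ω : Type*} [MeasurableSpace Ω] {μ : Measure Ω} {P : Ω → Prop}
    {S : Set Ω} (h : ∀ᵐ ω ∂μ, P ω) (hS : μ S ≠ 0) (hPQ : ∀ ω, ω ∈ S → ¬ P ω) : False :=
  hS (measure_mono_null (fun ω hq => hPQ ω hq) (ae_iff.mp h))

private lemma indep_case' {Ω : Type*} [MeasurableSpace Ω] (μ : Measure Ω)
    (y1 y2 z1 z2 : Ω → Bool) (hzind : IndepFun z1 z2 μ)
    (hae : ∀ᵐ ω ∂μ, y1 ω = z1 ω ∧ xor (y1 ω) (y2 ω) = z2 ω) :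
    (μ {ω | y1 ω = true ∧ xor (y1 ω) (y2 ω) = true}).toReal
      = (μ {ω | y1 ω = true}).toReal * (μ {ω | xor (y1 ω) (y2 ω) = true}).toReal := by
  have e1 : {ω | y1 ω = true} =ᵐ[μ] (z1 ⁻¹' {true}) := by
    rw [Filter.eventuallyEq_set]
    filter_upwards [hae] with ω h
    simp only [Set.mem_setOf_eq, Set.mem_preimage, Set.mem_singleton_iff, h.1]
  have e2 : {ω | xor (y1 ω) (y2 ω) = true} =ᵐ[μ] (z2 ⁻¹' {true}) := by
    rw [Filter.eventuallyEq_set]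
    filter_upwards [hae] with ω h
    simp only [Set.mem_setOf_eq, Set.mem_preimage, Set.mem_singleton_iff, h.2]
  have e12 : {ω | y1 ω = true ∧ xor (y1 ω) (y2 ω) = true}
      =ᵐ[μ] (z1 ⁻¹' {true} ∩ z2 ⁻¹' {true} : Set Ω) := by
    rw [Filter.eventuallyEq_set]
    filter_upwards [hae] with ω h
    obtain ⟨h1, h2⟩ := h
    simp only [Set.mem_setOf_eq, Set.mem_inter_iff, Set.mem_preimage, Set.mem_singleton_iff]
    rw [h2, h1]
  rw [measure_congr e1, measure_congr e2, measure_congr e12,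
    hzind.measure_inter_preimage_eq_mul {true} {true} (measurableSet_singleton _)
      (measurableSet_singleton _), ENNReal.toReal_mul]

/-- XOR mixtures need not be expressible as OR mixtures: with `x1 = y1` and
`x2 = y1 XOR y2`, the pair is correlated yet admits no OR-mixture decomposition
into two independent binary sources. -/
theorem xor_not_or_mixture
    {Ω : Type*} [MeasurableSpace Ω] (μ : Measure Ω) [IsProbabilityMeasure μ]
    (y1 y2 : Ω → Bool) (hy1 : Measurable y1) (hy2 : Measurable y2)
    (hind : IndepFun y1 y2 μ)
    (hp : (μ {ω | y1 ω = true}).toReal ≠ 0 ∧ (μ {ω | y1 ω = true}).toReal ≠ 1/2 ∧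
          (μ {ω | y1 ω = true}).toReal ≠ 1)
    (hq : (μ {ω | y2 ω = true}).toReal ≠ 0 ∧ (μ {ω | y2 ω = true}).toReal ≠ 1/2 ∧
          (μ {ω | y2 ω = true}).toReal ≠ 1) :
    ((μ {ω | y1 ω = true ∧ xor (y1 ω) (y2 ω) = true}).toReal
        ≠ (μ {ω | y1 ω = true}).toReal * (μ {ω | xor (y1 ω) (y2 ω) = true}).toReal) ∧
    ¬ ∃ (z1 z2 : Ω → Bool) (g : Fin 2 → Fin 2 → Bool),
        Measurable z1 ∧ Measurable z2 ∧ IndepFun z1 z2 μ ∧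
        (∀ᵐ ω ∂μ, y1 ω = ((g 0 0 && z1 ω) || (g 0 1 && z2 ω)) ∧
                  xor (y1 ω) (y2 ω) = ((g 1 0 && z1 ω) || (g 1 1 && z2 ω))) := by
  have hmA : MeasurableSet {ω | y1 ω = true} := hy1 (measurableSet_singleton true)
  have hmB : MeasurableSet {ω | y2 ω = true} := hy2 (measurableSet_singleton true)
  have hAB : μ ({ω | y1 ω = true} ∩ {ω | y2 ω = true})
      = μ {ω | y1 ω = true} * μ {ω | y2 ω = true} :=
    hind.measure_inter_preimage_eq_mul {true} {true} (measurableSet_singleton _)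
      (measurableSet_singleton _)
  have eBc : (y2 ⁻¹' {false}) = {ω | y2 ω = true}ᶜ := by ext ω; simp
  have eAc : (y1 ⁻¹' {false}) = {ω | y1 ω = true}ᶜ := by ext ω; simp
  have hABc : μ ({ω | y1 ω = true} ∩ {ω | y2 ω = true}ᶜ)
      = μ {ω | y1 ω = true} * μ {ω | y2 ω = true}ᶜ := by
    have h := hind.measure_inter_preimage_eq_mul {true} {false} (measurableSet_singleton _)
      (measurableSet_singleton _)
    rw [eBc] at h; exact h
  have hAcB : μ ({ω | y1 ω = true}ᶜ ∩ {ω | y2 ω = true})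
      = μ {ω | y1 ω = true}ᶜ * μ {ω | y2 ω = true} := by
    have h := hind.measure_inter_preimage_eq_mul {false} {true} (measurableSet_singleton _)
      (measurableSet_singleton _)
    rw [eAc] at h; exact h
  have hBc : μ ({ω | y2 ω = true}ᶜ) = 1 - μ {ω | y2 ω = true} := by
    rw [measure_compl hmB (measure_ne_top μ _), measure_univ]
  have hAc : μ ({ω | y1 ω = true}ᶜ) = 1 - μ {ω | y1 ω = true} := by
    rw [measure_compl hmA (measure_ne_top μ _), measure_univ]
  have tBc : (μ ({ω | y2 ω = true}ᶜ)).toReal = 1 - (μ {ω | y2 ω = true}).toReal := by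
    rw [hBc, ENNReal.toReal_sub_of_le prob_le_one ENNReal.one_ne_top, ENNReal.toReal_one]
  have tAc : (μ ({ω | y1 ω = true}ᶜ)).toReal = 1 - (μ {ω | y1 ω = true}).toReal := by
    rw [hAc, ENNReal.toReal_sub_of_le prob_le_one ENNReal.one_ne_top, ENNReal.toReal_one]
  have hset1 : {ω | y1 ω = true ∧ xor (y1 ω) (y2 ω) = true}
      = {ω | y1 ω = true} ∩ {ω | y2 ω = true}ᶜ := by
    ext ω; cases c1 : y1 ω <;> cases c2 : y2 ω <;> simp [c1, c2]
  have hset2 : {ω | xor (y1 ω) (y2 ω) = true}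
      = ({ω | y1 ω = true} ∩ {ω | y2 ω = true}ᶜ) ∪ ({ω | y1 ω = true}ᶜ ∩ {ω | y2 ω = true}) := by
    ext ω; cases c1 : y1 ω <;> cases c2 : y2 ω <;> simp [c1, c2]
  have hX2 : μ {ω | xor (y1 ω) (y2 ω) = true}
      = μ ({ω | y1 ω = true} ∩ {ω | y2 ω = true}ᶜ)
        + μ ({ω | y1 ω = true}ᶜ ∩ {ω | y2 ω = true}) := by
    rw [hset2, measure_union (Set.disjoint_left.mpr (by rintro ω ⟨h1, h2⟩ ⟨h3, h4⟩; exact h3 h1))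
      (hmA.compl.inter hmB)]
  have part1 : (μ {ω | y1 ω = true ∧ xor (y1 ω) (y2 ω) = true}).toReal
      ≠ (μ {ω | y1 ω = true}).toReal * (μ {ω | xor (y1 ω) (y2 ω) = true}).toReal := by
    have l1 : (μ {ω | y1 ω = true ∧ xor (y1 ω) (y2 ω) = true}).toReal
        = (μ {ω | y1 ω = true}).toReal * (1 - (μ {ω | y2 ω = true}).toReal) := by
      rw [hset1, hABc, ENNReal.toReal_mul, tBc]
    have l2 : (μ {ω | xor (y1 ω) (y2 ω) = true}).toReal
        = (μ {ω | y1 ω = true}).toReal * (1 - (μ {ω | y2 ω = true}).toReal)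
          + (1 - (μ {ω | y1 ω = true}).toReal) * (μ {ω | y2 ω = true}).toReal := by
      rw [hX2, ENNReal.toReal_add (measure_ne_top _ _) (measure_ne_top _ _), hABc, hAcB,
        ENNReal.toReal_mul, ENNReal.toReal_mul, tBc, tAc]
    rw [l1, l2]
    intro h
    set p := (μ {ω | y1 ω = true}).toReal
    set q := (μ {ω | y2 ω = true}).toReal
    have key : p * ((1 - p) * (1 - 2*q)) = 0 := by linear_combination h
    rcases mul_eq_zero.mp key with h0 | h0
    · exact hp.1 h0
    rcases mul_eq_zero.mp h0 with h1 | h1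
    · exact hp.2.2 (by linarith)
    · exact hq.2.1 (by linarith)
  refine ⟨part1, ?_⟩
  rintro ⟨z1, z2, g, hz1m, hz2m, hzind, hae⟩
  have hA0 : μ {ω | y1 ω = true} ≠ 0 := fun h => hp.1 (by rw [h]; simp)
  have hB0 : μ {ω | y2 ω = true} ≠ 0 := fun h => hq.1 (by rw [h]; simp)
  have hAc0 : μ ({ω | y1 ω = true}ᶜ) ≠ 0 := by
    intro h
    apply hp.2.2
    have h2 := tAc
    rw [h] at h2
    simp at h2
    linarith
  have hBc0 : μ ({ω | y2 ω = true}ᶜ) ≠ 0 := by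
    intro h
    apply hq.2.2
    have h2 := tBc
    rw [h] at h2
    simp at h2
    linarith
  have hAB0 : μ ({ω | y1 ω = true} ∩ {ω | y2 ω = true}) ≠ 0 := by
    rw [hAB]; exact mul_ne_zero hA0 hB0
  have hABc0 : μ ({ω | y1 ω = true} ∩ {ω | y2 ω = true}ᶜ) ≠ 0 := by
    rw [hABc]; exact mul_ne_zero hA0 hBc0
  have hAcB0 : μ ({ω | y1 ω = true}ᶜ ∩ {ω | y2 ω = true}) ≠ 0 := by
    rw [hAcB]; exact mul_ne_zero hAc0 hB0
  cases h00 : g 0 0 <;> cases h01 : g 0 1 <;> cases h10 : g 1 0 <;> cases h11 : g 1 1 <;>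
    simp only [h00, h01, h10, h11, Bool.false_and, Bool.true_and, Bool.false_or,
      Bool.or_false] at hae
  -- FFFF
  · refine ae_contra' hae hA0 ?_
    rintro ω m1 ⟨e1, e2⟩
    simp only [Set.mem_setOf_eq] at m1
    simp [m1] at e1
  -- FFFT
  · refine ae_contra' hae hA0 ?_
    rintro ω m1 ⟨e1, e2⟩
    simp only [Set.mem_setOf_eq] at m1
    simp [m1] at e1
  -- FFTF
  · refine ae_contra' hae hA0 ?_
    rintro ω m1 ⟨e1, e2⟩
    simp only [Set.mem_setOf_eq] at m1
    simp [m1] at e1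
  -- FFTT
  · refine ae_contra' hae hA0 ?_
    rintro ω m1 ⟨e1, e2⟩
    simp only [Set.mem_setOf_eq] at m1
    simp [m1] at e1
  -- FTFF
  · refine ae_contra' hae hABc0 ?_
    rintro ω ⟨m1, m2⟩ ⟨e1, e2⟩
    simp only [Set.mem_setOf_eq] at m1
    simp only [Set.mem_compl_iff, Set.mem_setOf_eq, Bool.not_eq_true] at m2
    simp [m1, m2] at e2
  -- FTFT
  · refine ae_contra' hae hAB0 ?_
    rintro ω ⟨m1, m2⟩ ⟨e1, e2⟩
    simp only [Set.mem_setOf_eq] at m1 m2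
    cases c2 : z2 ω <;> simp [m1, m2, c2] at e1 e2
  -- FTTF : x1 = z2, x2 = z1 (independence)
  · exact part1 (indep_case' μ y1 y2 z2 z1 hzind.symm hae)
  -- FTTT
  · refine ae_contra' hae hAB0 ?_
    rintro ω ⟨m1, m2⟩ ⟨e1, e2⟩
    simp only [Set.mem_setOf_eq] at m1 m2
    cases c1 : z1 ω <;> cases c2 : z2 ω <;> simp [m1, m2, c1, c2] at e1 e2
  -- TFFF
  · refine ae_contra' hae hABc0 ?_
    rintro ω ⟨m1, m2⟩ ⟨e1, e2⟩
    simp only [Set.mem_setOf_eq] at m1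
    simp only [Set.mem_compl_iff, Set.mem_setOf_eq, Bool.not_eq_true] at m2
    simp [m1, m2] at e2
  -- TFFT : x1 = z1, x2 = z2 (independence)
  · exact part1 (indep_case' μ y1 y2 z1 z2 hzind hae)
  -- TFTF
  · refine ae_contra' hae hAB0 ?_
    rintro ω ⟨m1, m2⟩ ⟨e1, e2⟩
    simp only [Set.mem_setOf_eq] at m1 m2
    cases c1 : z1 ω <;> simp [m1, m2, c1] at e1 e2
  -- TFTT
  · refine ae_contra' hae hAB0 ?_
    rintro ω ⟨m1, m2⟩ ⟨e1, e2⟩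
    simp only [Set.mem_setOf_eq] at m1 m2
    cases c1 : z1 ω <;> cases c2 : z2 ω <;> simp [m1, m2, c1, c2] at e1 e2
  -- TTFF
  · refine ae_contra' hae hABc0 ?_
    rintro ω ⟨m1, m2⟩ ⟨e1, e2⟩
    simp only [Set.mem_setOf_eq] at m1
    simp only [Set.mem_compl_iff, Set.mem_setOf_eq, Bool.not_eq_true] at m2
    simp [m1, m2] at e2
  -- TTFT
  · refine ae_contra' hae hAcB0 ?_
    rintro ω ⟨m1, m2⟩ ⟨e1, e2⟩
    simp only [Set.mem_compl_iff, Set.mem_setOf_eq, Bool.not_eq_true] at m1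
    simp only [Set.mem_setOf_eq] at m2
    cases c1 : z1 ω <;> cases c2 : z2 ω <;> simp [m1, m2, c1, c2] at e1 e2
  -- TTTF
  · refine ae_contra' hae hAcB0 ?_
    rintro ω ⟨m1, m2⟩ ⟨e1, e2⟩
    simp only [Set.mem_compl_iff, Set.mem_setOf_eq, Bool.not_eq_true] at m1
    simp only [Set.mem_setOf_eq] at m2
    cases c1 : z1 ω <;> cases c2 : z2 ω <;> simp [m1, m2, c1, c2] at e1 e2
  -- TTTT
  · refine ae_contra' hae hAB0 ?_
    rintro ω ⟨m1, m2⟩ ⟨e1, e2⟩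
    simp only [Set.mem_setOf_eq] at m1 m2
    cases c1 : z1 ω <;> cases c2 : z2 ω <;> simp [m1, m2, c1, c2] at e1 e2
end

section
/- Let y1,...,yn be mutually independent non-degenerate binary random variables, and let x1,...,xm be defined by x_i = ∨_{j : g_{ij}=1} y_j for a binary m×n matrix G with no zero rows. If the covariance matrix of (x1,...,xm) is diagonal (all pairwise covariances of distinct x_i, x_k are zero), then for any two distinct rows i ≠ k of G, there is no column j with g_{ij} = g_{kj} = 1; i.e., the rows of G have pairwise disjoint supports. -/
open MeasureTheory ProbabilityTheory

theorem diagonal_covariance_disjoint_rows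
    {Ω : Type*} [MeasurableSpace Ω] (μ : Measure Ω) [IsProbabilityMeasure μ]
    {m n : ℕ} (y : Fin n → Ω → Bool) (hy : ∀ j, Measurable (y j))
    (hind : iIndepFun y μ)
    (hnd : ∀ j, 0 < (μ {ω | y j ω = true}).toReal ∧ (μ {ω | y j ω = true}).toReal < 1)
    (G : Fin m → Fin n → Bool)
    (hrow : ∀ i, ∃ j, G i j = true)
    (x : Fin m → Ω → Bool)
    (hx : ∀ i ω, x i ω = decide (∃ j, G i j = true ∧ y j ω = true))
    (hdiag : ∀ i k, i ≠ k →
      (μ {ω | x i ω = true ∧ x k ω = true}).toReal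
        = (μ {ω | x i ω = true}).toReal * (μ {ω | x k ω = true}).toReal) :
    ∀ i k, i ≠ k → ¬ ∃ j, G i j = true ∧ G k j = true := by
  intro i k hik ⟨j0, hj0i, hj0k⟩
  -- notation
  set S : Fin m → Finset (Fin n) := fun i => Finset.univ.filter (fun j => G i j = true) with hS
  set q : Fin n → ℝ := fun j => (μ {ω | y j ω = false}).toReal with hqdef
  have hyt : ∀ j, MeasurableSet {ω | y j ω = true} := by
    intro j
    exact (hy j) (measurableSet_singleton true)
  have hyf : ∀ j, {ω | y j ω = false} = {ω | y j ω = true}ᶜ := by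
    intro j; ext ω; simp
  have hq : ∀ j, 0 < q j ∧ q j < 1 := by
    intro j
    have h1 : μ {ω | y j ω = false} = 1 - μ {ω | y j ω = true} := by
      rw [hyf j, prob_compl_eq_one_sub (hyt j)]
    have hle : μ {ω | y j ω = true} ≤ 1 := prob_le_one
    have htr : q j = 1 - (μ {ω | y j ω = true}).toReal := by
      rw [hqdef]; simp only [h1]
      rw [ENNReal.toReal_sub_of_le hle ENNReal.one_ne_top, ENNReal.toReal_one]
    constructor
    · rw [htr]; linarith [(hnd j).2]
    · rw [htr]; linarith [(hnd j).1]
  -- measure of finite intersections of false-events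
  have hmeas : ∀ s : Finset (Fin n),
      (μ (⋂ j ∈ s, {ω | y j ω = false})).toReal = ∏ j ∈ s, q j := by
    intro s
    have := hind.meas_biInter (S := s) (s := fun j => {ω | y j ω = false})
      (fun j _ => ⟨{false}, measurableSet_singleton false, by ext ω; simp⟩)
    rw [this, ENNReal.toReal_prod]
  -- false-event of x i is the intersection
  have hxf : ∀ i, {ω | x i ω = false} = ⋂ j ∈ S i, {ω | y j ω = false} := by
    intro i; ext ω
    simp only [Set.mem_setOf_eq, hx, Set.mem_iInter, hS, Finset.mem_filter,
      Finset.mem_univ, true_and, decide_eq_false_iff_not, not_exists, not_and,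
      Bool.not_eq_true]
  have hxfk : ∀ i k, {ω | x i ω = false ∧ x k ω = false}
      = ⋂ j ∈ S i ∪ S k, {ω | y j ω = false} := by
    intro i k; ext ω
    have h1 := hxf i; have h2 := hxf k
    simp only [Set.ext_iff, Set.mem_setOf_eq, Set.mem_iInter] at h1 h2
    simp only [Set.mem_setOf_eq, Set.mem_iInter, Finset.mem_union]
    constructor
    · rintro ⟨ha, hb⟩ j hj
      rcases hj with hj | hj
      · exact (h1 ω).1 ha j hj
      · exact (h2 ω).1 hb j hj
    · intro h
      exact ⟨(h1 ω).2 (fun j hj => h j (Or.inl hj)), (h2 ω).2 (fun j hj => h j (Or.inr hj))⟩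
  -- measurability of true-events of x
  have hxmeas : ∀ i, MeasurableSet {ω | x i ω = true} := by
    intro i
    have : {ω | x i ω = true} = ⋃ j ∈ S i, {ω | y j ω = true} := by
      ext ω
      simp only [Set.mem_setOf_eq, hx, Set.mem_iUnion, hS, Finset.mem_filter,
        Finset.mem_univ, true_and, decide_eq_true_eq]
      constructor
      · rintro ⟨j, h1, h2⟩; exact ⟨j, h1, h2⟩
      · rintro ⟨j, h1, h2⟩; exact ⟨j, h1, h2⟩
    rw [this]
    exact MeasurableSet.biUnion (Finset.countable_toSet _) (fun j _ => hyt j)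
  -- abbreviations
  set A := {ω | x i ω = true} with hA
  set B := {ω | x k ω = true} with hB
  have hAc : Aᶜ = {ω | x i ω = false} := by ext ω; simp [hA]
  have hBc : Bᶜ = {ω | x k ω = false} := by ext ω; simp [hB]
  have hABc : Aᶜ ∩ Bᶜ = {ω | x i ω = false ∧ x k ω = false} := by
    ext ω; simp [hA, hB]
  -- real values
  set a := (μ A).toReal with ha
  set b := (μ B).toReal with hb
  have hfinA : μ A ≠ ⊤ := measure_ne_top μ A
  have haux : ∀ s : Set Ω, MeasurableSet s → (μ sᶜ).toReal = 1 - (μ s).toReal := by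
    intro s hs
    rw [prob_compl_eq_one_sub hs, ENNReal.toReal_sub_of_le prob_le_one ENNReal.one_ne_top,
      ENNReal.toReal_one]
  -- union-inter real identity
  have hui : (μ (A ∪ B)).toReal + (μ (A ∩ B)).toReal = a + b := by
    have := measure_union_add_inter (μ := μ) A (hxmeas k)
    have h2 := congrArg ENNReal.toReal this
    rw [ENNReal.toReal_add (measure_ne_top μ _) (measure_ne_top μ _),
      ENNReal.toReal_add (measure_ne_top μ _) (measure_ne_top μ _)] at h2
    exact h2
  have hAB : (μ (A ∩ B)).toReal = a * b := by
    have := hdiag i k hik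
    have he : A ∩ B = {ω | x i ω = true ∧ x k ω = true} := by ext ω; simp [hA, hB]
    rw [he]; exact this
  -- covariance of complements is zero
  have hcompl : (μ (Aᶜ ∩ Bᶜ)).toReal = (1 - a) * (1 - b) := by
    have h1 : Aᶜ ∩ Bᶜ = (A ∪ B)ᶜ := by rw [Set.compl_union]
    rw [h1, haux _ ((hxmeas i).union (hxmeas k))]
    nlinarith [hui, hAB]
  -- product identities
  have hPi : (μ Aᶜ).toReal = ∏ j ∈ S i, q j := by rw [hAc, hxf i]; exact hmeas _
  have hPk : (μ Bᶜ).toReal = ∏ j ∈ S k, q j := by rw [hBc, hxf k]; exact hmeas _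
  have hPik : (μ (Aᶜ ∩ Bᶜ)).toReal = ∏ j ∈ S i ∪ S k, q j := by
    rw [hABc, hxfk i k]; exact hmeas _
  have hkey : ∏ j ∈ S i ∪ S k, q j = (∏ j ∈ S i, q j) * (∏ j ∈ S k, q j) := by
    rw [← hPi, ← hPk, ← hPik, hcompl, haux _ (hxmeas i), haux _ (hxmeas k)]
  -- decompose products
  have hsplit1 : ∏ j ∈ S i ∪ S k, q j = (∏ j ∈ S i, q j) * (∏ j ∈ S k \ S i, q j) := by
    rw [← Finset.prod_union (Finset.disjoint_sdiff), Finset.union_sdiff_self_eq_union]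
  have hsub : S k ∩ S i ⊆ S k := Finset.inter_subset_left
  have hsplit2 : ∏ j ∈ S k, q j = (∏ j ∈ S k \ S i, q j) * (∏ j ∈ S k ∩ S i, q j) := by
    rw [← Finset.sdiff_inter_self_left (s := S k) (t := S i)]
    exact (Finset.prod_sdiff hsub).symm
  have hpos : ∀ (s : Finset (Fin n)), 0 < ∏ j ∈ s, q j :=
    fun s => Finset.prod_pos (fun j _ => (hq j).1)
  have hone : ∏ j ∈ S k ∩ S i, q j = 1 := by
    have h := hkey
    rw [hsplit1, hsplit2] at h
    have hp1 := hpos (S i)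
    have hp2 := hpos (S k \ S i)
    have h3 : (∏ j ∈ S k \ S i, q j) = (∏ j ∈ S k \ S i, q j) * ∏ j ∈ S k ∩ S i, q j :=
      mul_left_cancel₀ hp1.ne' h
    have h4 : (∏ j ∈ S k \ S i, q j) * 1 = (∏ j ∈ S k \ S i, q j) * ∏ j ∈ S k ∩ S i, q j := by
      rw [mul_one]; exact h3
    exact (mul_left_cancel₀ hp2.ne' h4).symm
  -- contradiction: j0 is in the intersection and q j0 < 1
  have hj0mem : j0 ∈ S k ∩ S i := by
    simp [hS, Finset.mem_inter, hj0i, hj0k]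
  have hlt : ∏ j ∈ S k ∩ S i, q j < 1 := by
    have hrest : ∏ j ∈ (S k ∩ S i).erase j0, q j ≤ 1 :=
      Finset.prod_le_one (fun j _ => le_of_lt (hq j).1) (fun j _ => le_of_lt (hq j).2)
    rw [← Finset.mul_prod_erase _ _ hj0mem]
    calc q j0 * ∏ j ∈ (S k ∩ S i).erase j0, q j
        ≤ q j0 * 1 := by
          exact mul_le_mul_of_nonneg_left hrest (le_of_lt (hq j0).1)
      _ = q j0 := mul_one _
      _ < 1 := (hq j0).2
  linarith [hone, hlt]
end

section
/- Let y1,...,yn be mutually independent non-degenerate binary random variables and x = G ⊗ y the OR mixture for a binary matrix G. If the components of x are non-degenerate and pairwise independent, then they are jointly (mutually) independent. -/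
open MeasureTheory ProbabilityTheory

lemma comap_bool_eq_generateFrom {Ω : Type*} (f : Ω → Bool) :
    MeasurableSpace.comap f inferInstance =
      MeasurableSpace.generateFrom {f ⁻¹' {false}} := by
  refine le_antisymm ?_ ?_
  · letI mΩ : MeasurableSpace Ω := MeasurableSpace.generateFrom {f ⁻¹' {false}}
    rw [← measurable_iff_comap_le]
    refine measurable_to_countable' (fun b => ?_)
    cases b
    · exact MeasurableSpace.measurableSet_generateFrom rfl
    · have h : f ⁻¹' {true} = (f ⁻¹' {false})ᶜ := by
        ext ω; cases h : f ω <;> simp [h]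
      rw [h]
      exact (MeasurableSpace.measurableSet_generateFrom (Set.mem_singleton _)).compl
  · refine MeasurableSpace.generateFrom_le ?_
    rintro s hs
    rw [Set.mem_singleton_iff] at hs
    subst hs
    exact ⟨{false}, measurableSet_singleton false, rfl⟩

/-- For OR mixtures of independent non-degenerate sources, pairwise independence of
the non-degenerate components implies joint independence. -/
theorem or_mixture_pairwise_indep_implies_joint
    {Ω : Type*} [MeasurableSpace Ω] (μ : Measure Ω) [IsProbabilityMeasure μ]
    {m n : ℕ} (y : Fin n → Ω → Bool) (hy : ∀ j, Measurable (y j))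
    (hind : iIndepFun y μ)
    (hnd : ∀ j, 0 < (μ {ω | y j ω = true}).toReal ∧ (μ {ω | y j ω = true}).toReal < 1)
    (G : Fin m → Fin n → Bool)
    (x : Fin m → Ω → Bool)
    (hx : ∀ i ω, x i ω = decide (∃ j, G i j = true ∧ y j ω = true))
    (hxnd : ∀ i, 0 < (μ {ω | x i ω = true}).toReal ∧ (μ {ω | x i ω = true}).toReal < 1)
    (hpair : ∀ i k, i ≠ k → IndepFun (x i) (x k) μ) :
    iIndepFun x μ := by
  classical
  set S : Fin m → Finset (Fin n) := fun i => Finset.univ.filter (fun j => G i j = true)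
    with hSdef
  set q : Fin n → ENNReal := fun j => μ ((y j) ⁻¹' {false}) with hqdef
  -- basic facts about the sources
  have hyMeasSet : ∀ j, MeasurableSet ((y j) ⁻¹' {true}) :=
    fun j => (hy j) (measurableSet_singleton true)
  have hset : ∀ j, (y j) ⁻¹' {true} = {ω | y j ω = true} := by
    intro j; ext ω; simp
  have hpt_lt : ∀ j, μ ((y j) ⁻¹' {true}) < 1 := by
    intro j
    have h2 := (hnd j).2
    rw [← hset j] at h2
    have := (ENNReal.toReal_lt_toReal (measure_ne_top μ _) ENNReal.one_ne_top).mp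
      (by simpa using h2)
    exact this
  have hpt_ne : ∀ j, μ ((y j) ⁻¹' {true}) ≠ 0 := by
    intro j h0
    have h1 := (hnd j).1
    rw [← hset j, h0] at h1
    simp at h1
  have hcompl : ∀ j, (y j) ⁻¹' {false} = ((y j) ⁻¹' {true})ᶜ := by
    intro j; ext ω; cases h : y j ω <;> simp [h]
  have hq_eq : ∀ j, q j = 1 - μ ((y j) ⁻¹' {true}) := by
    intro j
    rw [hqdef]
    simp only
    rw [hcompl j, measure_compl (hyMeasSet j) (measure_ne_top μ _), measure_univ]
  have hqpos : ∀ j, q j ≠ 0 := by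
    intro j
    rw [hq_eq j]
    exact ne_of_gt (tsub_pos_iff_lt.mpr (hpt_lt j))
  have hqlt : ∀ j, q j < 1 := by
    intro j
    rw [hq_eq j]
    exact ENNReal.sub_lt_self ENNReal.one_ne_top one_ne_zero (hpt_ne j)
  have hqle : ∀ j, q j ≤ 1 := fun j => (hqlt j).le
  -- product formula for the sources
  have hprodF : ∀ F : Finset (Fin n),
      μ (⋂ j ∈ F, (y j) ⁻¹' {false}) = ∏ j ∈ F, q j := by
    intro F
    exact hind.meas_biInter (fun j _ => ⟨{false}, measurableSet_singleton false, rfl⟩)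
  -- the event x i = false
  have hxfalse : ∀ i, (x i) ⁻¹' {false} = ⋂ j ∈ S i, (y j) ⁻¹' {false} := by
    intro i
    ext ω
    simp only [Set.mem_preimage, Set.mem_singleton_iff, hx i ω, Set.mem_iInter,
      hSdef, Finset.mem_filter, Finset.mem_univ, true_and,
      decide_eq_false_iff_not, not_exists]
    constructor
    · intro h j hG
      have := h j
      rw [not_and] at this
      have := this hG
      simpa using this
    · intro h j
      rw [not_and]
      intro hG
      simp [h j hG]
  have hxq : ∀ i, μ ((x i) ⁻¹' {false}) = ∏ j ∈ S i, q j := by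
    intro i
    rw [hxfalse i, hprodF]
  -- measurability of the mixtures
  have hxmeas : ∀ i, Measurable (x i) := by
    intro i
    refine measurable_to_countable' (fun b => ?_)
    cases b
    · rw [hxfalse i]
      exact MeasurableSet.biInter (Finset.countable_toSet _)
        (fun j _ => (hy j) (measurableSet_singleton false))
    · have h : (x i) ⁻¹' {true} = ((x i) ⁻¹' {false})ᶜ := by
        ext ω; cases h : x i ω <;> simp [h]
      rw [h, hxfalse i]
      exact (MeasurableSet.biInter (Finset.countable_toSet _)
        (fun j _ => (hy j) (measurableSet_singleton false))).compl
  -- pairwise independence forces disjoint supports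
  have hdisj : ∀ i k, i ≠ k → Disjoint (S i) (S k) := by
    intro i k hik
    by_contra hcon
    obtain ⟨j0, hj0i, hj0k⟩ := Finset.not_disjoint_iff.mp hcon
    have hj0 : j0 ∈ S i ∩ S k := Finset.mem_inter.mpr ⟨hj0i, hj0k⟩
    have hpairik := (hpair i k hik).measure_inter_preimage_eq_mul {false} {false}
      (measurableSet_singleton _) (measurableSet_singleton _)
    have hunion : (x i) ⁻¹' {false} ∩ (x k) ⁻¹' {false}
        = ⋂ j ∈ S i ∪ S k, (y j) ⁻¹' {false} := by
      rw [hxfalse i, hxfalse k]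
      ext ω
      simp only [Set.mem_inter_iff, Set.mem_iInter, Finset.mem_union]
      constructor
      · rintro ⟨h1, h2⟩ j (hj | hj)
        · exact h1 j hj
        · exact h2 j hj
      · intro h
        exact ⟨fun j hj => h j (Or.inl hj), fun j hj => h j (Or.inr hj)⟩
    rw [hunion, hprodF, hxq, hxq] at hpairik
    have hpui : (∏ j ∈ S i ∪ S k, q j) * (∏ j ∈ S i ∩ S k, q j)
        = (∏ j ∈ S i, q j) * (∏ j ∈ S k, q j) := Finset.prod_union_inter
    have ha0 : (∏ j ∈ S i ∪ S k, q j) ≠ 0 :=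
      Finset.prod_ne_zero_iff.mpr (fun j _ => hqpos j)
    have hale : (∏ j ∈ S i ∪ S k, q j) ≤ 1 :=
      Finset.prod_le_one (fun j _ => zero_le) (fun j _ => hqle j)
    have hat : (∏ j ∈ S i ∪ S k, q j) ≠ ⊤ :=
      ne_top_of_le_ne_top ENNReal.one_ne_top hale
    have hkey : (∏ j ∈ S i ∪ S k, q j) * (∏ j ∈ S i ∩ S k, q j)
        = (∏ j ∈ S i ∪ S k, q j) * 1 := by
      rw [mul_one, hpui, ← hpairik]
    have hb1 : (∏ j ∈ S i ∩ S k, q j) = 1 :=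
      (ENNReal.mul_right_inj ha0 hat).mp hkey
    have hblt : (∏ j ∈ S i ∩ S k, q j) < 1 := by
      calc (∏ j ∈ S i ∩ S k, q j)
          = q j0 * ∏ j ∈ (S i ∩ S k).erase j0, q j := (Finset.mul_prod_erase _ _ hj0).symm
        _ ≤ q j0 * 1 := by
            exact mul_le_mul_right (Finset.prod_le_one (fun j _ => zero_le)
              (fun j _ => hqle j)) _
        _ = q j0 := mul_one _
        _ < 1 := hqlt j0
    rw [hb1] at hblt
    exact lt_irrefl _ hblt
  -- conclude joint independence via a π-system argument
  rw [iIndepFun_iff_iIndep]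
  refine iIndepSets.iIndep (fun i => measurable_iff_comap_le.mp (hxmeas i))
    (fun i => {(x i) ⁻¹' {false}}) (fun i => IsPiSystem.singleton _)
    (fun i => comap_bool_eq_generateFrom (x i)) ?_
  rw [iIndepSets_iff]
  intro T f' hf'
  have hf'' : ∀ i ∈ T, f' i = (x i) ⁻¹' {false} := fun i hi => hf' i hi
  have hInter : ⋂ i ∈ T, f' i = ⋂ j ∈ T.biUnion S, (y j) ⁻¹' {false} := by
    have h1 : ⋂ i ∈ T, f' i = ⋂ i ∈ T, ⋂ j ∈ S i, (y j) ⁻¹' {false} := by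
      apply Set.iInter₂_congr
      intro i hi
      rw [hf'' i hi, hxfalse i]
    rw [h1]
    ext ω
    simp only [Set.mem_iInter, Finset.mem_biUnion]
    constructor
    · rintro h j ⟨i, hi, hji⟩
      exact h i hi j hji
    · intro h i hi j hji
      exact h j ⟨i, hi, hji⟩
  rw [hInter, hprodF, Finset.prod_biUnion (fun i _ k _ hik => hdisj i k hik)]
  refine Finset.prod_congr rfl (fun i hi => ?_)
  rw [hf'' i hi, hxq i]
end

section
/- Let y1,...,yn be mutually independent binary random variables with 0 < p_j = P(y_j=1) < 1, and suppose the n columns of the binary mixing matrix G are exactly all distinct nonzero vectors of {0,1}^m (so n = 2^m − 1), with x = G ⊗ y. Let F_0 = P(x = 0) and, for a column index k whose column g_k has exactly one 1 (degree 1), let F_k = P(x = g_k). Then F_0 = ∏_{j=1}^n (1−p_j) > 0 and p_k = F_k / (F_k + F_0). -/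
open MeasureTheory ProbabilityTheory

/-- Basis step of the identifiability construction: with the complete mixing matrix
(columns enumerating all nonzero binary vectors), `F_0 = ∏ (1 - p_j) > 0`, and for a
degree-one column `k`, `p_k = F_k / (F_k + F_0)`. -/
theorem complete_mixing_basis_step
    {Ω : Type*} [MeasurableSpace Ω] (μ : Measure Ω) [IsProbabilityMeasure μ]
    {m n : ℕ} (y : Fin n → Ω → Bool) (hy : ∀ j, Measurable (y j))
    (hind : iIndepFun y μ)
    (hnd : ∀ j, 0 < (μ {ω | y j ω = true}).toReal ∧ (μ {ω | y j ω = true}).toReal < 1)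
    (G : Fin m → Fin n → Bool)
    (hinj : Function.Injective (fun j (i : Fin m) => G i j))
    (hsurj : ∀ v : Fin m → Bool, v ≠ (fun _ => false) → ∃ j, (fun i => G i j) = v)
    (hnz : ∀ j, ∃ i, G i j = true)
    (hn : n = 2 ^ m - 1)
    (x : Fin m → Ω → Bool)
    (hx : ∀ i ω, x i ω = decide (∃ j, G i j = true ∧ y j ω = true))
    (k : Fin n)
    (hk : (Finset.univ.filter (fun i => G i k = true)).card = 1) :
    (μ {ω | ∀ i, x i ω = false}).toReal
        = ∏ j, (1 - (μ {ω | y j ω = true}).toReal) ∧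
    0 < (μ {ω | ∀ i, x i ω = false}).toReal ∧
    (μ {ω | y k ω = true}).toReal
      = (μ {ω | ∀ i, x i ω = G i k}).toReal
          / ((μ {ω | ∀ i, x i ω = G i k}).toReal + (μ {ω | ∀ i, x i ω = false}).toReal) := by
  set p : Fin n → ℝ := fun j => (μ {ω | y j ω = true}).toReal with hp
  -- independence for arbitrary boolean patterns
  have hmeas : ∀ b : Fin n → Bool,
      μ (⋂ j, y j ⁻¹' {b j}) = ∏ j, μ (y j ⁻¹' {b j}) := by
    intro b
    exact hind.meas_iInter (fun j => ⟨{b j}, trivial, rfl⟩)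
  -- single-coordinate probabilities
  have htrue : ∀ j, (μ (y j ⁻¹' {true})).toReal = p j := by
    intro j
    congr 1
  have hset_true : ∀ j, y j ⁻¹' {true} = {ω | y j ω = true} := by
    intro j; rfl
  have hfalse : ∀ j, (μ (y j ⁻¹' {false})).toReal = 1 - p j := by
    intro j
    have hc : y j ⁻¹' {false} = {ω | y j ω = true}ᶜ := by
      ext ω; simp [Set.mem_preimage]
    have hms : MeasurableSet {ω | y j ω = true} := (hy j) (measurableSet_singleton true)
    rw [hc, prob_compl_eq_one_sub hms]
    rw [ENNReal.toReal_sub_of_le prob_le_one (by simp), ENNReal.toReal_one]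
  -- event {x = 0} = {y = 0}
  have hE0 : {ω | ∀ i, x i ω = false} = ⋂ j, y j ⁻¹' {false} := by
    ext ω
    simp only [Set.mem_setOf_eq, Set.mem_iInter, Set.mem_preimage, Set.mem_singleton_iff, hx,
      decide_eq_false_iff_not, not_exists, not_and]
    constructor
    · intro h j
      by_contra hyj
      obtain ⟨i, hi⟩ := hnz j
      exact (h i j hi) (by simpa using hyj)
    · intro h i j _ hj
      rw [h j] at hj; exact Bool.false_ne_true hj
  -- the unique index i0 of column k
  obtain ⟨i0, hi0⟩ := Finset.card_eq_one.mp hk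
  have hGk : ∀ i, G i k = true ↔ i = i0 := by
    intro i
    have h2 : i ∈ Finset.filter (fun i => G i k = true) Finset.univ
        ↔ i ∈ ({i0} : Finset (Fin m)) := by rw [hi0]
    simpa using h2
  -- event {x = g_k} = {y = e_k}
  have hEk : {ω | ∀ i, x i ω = G i k}
      = ⋂ j, y j ⁻¹' {if j = k then true else false} := by
    ext ω
    simp only [Set.mem_setOf_eq, Set.mem_iInter, Set.mem_preimage, Set.mem_singleton_iff]
    constructor
    · intro h j
      by_cases hjk : j = k
      · rw [if_pos hjk, hjk]
        have hxi0 : x i0 ω = true := by rw [h i0, (hGk i0).mpr rfl]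
        rw [hx] at hxi0
        obtain ⟨j', hj', hyj'⟩ := of_decide_eq_true hxi0
        by_cases hj'k : j' = k
        · rwa [hj'k] at hyj'
        · exfalso
          -- show column j' = column k, contradicting injectivity
          have hcol : ∀ i, G i j' = true → i = i0 := by
            intro i hi
            have hxt : x i ω = true := by
              rw [hx]; exact decide_eq_true ⟨j', hi, hyj'⟩
            exact (hGk i).mp ((h i).symm.trans hxt)
          have : (fun i => G i j') = fun i => G i k := by
            funext i
            by_cases hii : i = i0
            · rw [hii, (hGk i0).mpr rfl]
              rcases hnz j' with ⟨i', hi'⟩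
              rwa [hcol i' hi'] at hi'
            · have h1 : G i j' = false := by
                cases hGij : G i j'
                · rfl
                · exact absurd (hcol i hGij) hii
              have h2 : G i k = false := by
                cases hGik : G i k
                · rfl
                · exact absurd ((hGk i).mp hGik) hii
              rw [h1, h2]
          exact hj'k (hinj this)
      · simp only [if_neg hjk]
        by_contra hyj
        have hyj : y j ω = true := by simpa using hyj
        -- show column j = column k, contradiction
        have hcol : ∀ i, G i j = true → i = i0 := by
          intro i hi
          have hxt : x i ω = true := by
            rw [hx]; exact decide_eq_true ⟨j, hi, hyj⟩
          exact (hGk i).mp ((h i).symm.trans hxt)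
        have : (fun i => G i j) = fun i => G i k := by
          funext i
          by_cases hii : i = i0
          · rw [hii, (hGk i0).mpr rfl]
            rcases hnz j with ⟨i', hi'⟩
            rwa [hcol i' hi'] at hi'
          · have h1 : G i j = false := by
              cases hGij : G i j
              · rfl
              · exact absurd (hcol i hGij) hii
            have h2 : G i k = false := by
              cases hGik : G i k
              · rfl
              · exact absurd ((hGk i).mp hGik) hii
            rw [h1, h2]
        exact hjk (hinj this)
    · intro h i
      rw [hx]
      cases hGik : G i k
      · simp only [decide_eq_false_iff_not, not_exists, not_and]
        intro j hj hyj
        have hjk : j ≠ k := by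
          rintro rfl
          rw [(hGk i).mp hj] at hGik
          rw [(hGk i0).mpr rfl] at hGik
          exact Bool.noConfusion hGik
        have := h j
        rw [if_neg hjk] at this
        rw [this] at hyj
        exact Bool.false_ne_true hyj
      · refine decide_eq_true ⟨k, hGik, ?_⟩
        have := h k
        rwa [if_pos rfl] at this
  -- compute F0
  have hF0 : (μ {ω | ∀ i, x i ω = false}).toReal = ∏ j, (1 - p j) := by
    rw [hE0, hmeas (fun _ => false), ENNReal.toReal_prod]
    exact Finset.prod_congr rfl fun j _ => hfalse j
  have hQpos : ∀ s : Finset (Fin n), 0 < ∏ j ∈ s, (1 - p j) :=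
    fun s => Finset.prod_pos fun j _ => by linarith [(hnd j).2]
  refine ⟨hF0, by rw [hF0]; exact hQpos _, ?_⟩
  -- compute Fk
  have hFk : (μ {ω | ∀ i, x i ω = G i k}).toReal
      = p k * ∏ j ∈ Finset.univ.erase k, (1 - p j) := by
    rw [hEk, hmeas (fun j => if j = k then true else false), ENNReal.toReal_prod,
      ← Finset.mul_prod_erase Finset.univ _ (Finset.mem_univ k)]
    congr 1
    · rw [if_pos rfl]; exact htrue k
    · refine Finset.prod_congr rfl fun j hj => ?_
      rw [if_neg (Finset.ne_of_mem_erase hj)]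
      exact hfalse j
  have hF0' : (μ {ω | ∀ i, x i ω = false}).toReal
      = (1 - p k) * ∏ j ∈ Finset.univ.erase k, (1 - p j) := by
    rw [hF0, ← Finset.mul_prod_erase Finset.univ _ (Finset.mem_univ k)]
  rw [hFk, hF0']
  set Q := ∏ j ∈ Finset.univ.erase k, (1 - p j) with hQdef
  have hQ : (0:ℝ) < Q := hQpos _
  rw [show p k * Q + (1 - p k) * Q = Q by ring, mul_div_assoc, div_self hQ.ne', mul_one]
end

section
/- Let x = (x_1,...,x_h) be an OR mixture x = G ⊗ y of mutually independent binary sources y. Condition on the event {x_h = 0}. Then the conditional joint distribution of (x_1,...,x_{h-1}) given x_h = 0 equals the distribution of the OR mixture G' ⊗ y', where G' is G restricted to rows 1..h−1 and to the columns j with g_{hj} = 0, and y' consists of mutually independent binary sources with the same 1-probabilities p_j as the corresponding y_j. In particular, P(x_1=v_1,...,x_{h-1}=v_{h-1} | x_h=0) = P(G' ⊗ y' = v). -/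
open MeasureTheory ProbabilityTheory

/-- Lemma 4 of the paper: conditioning an OR mixture on `x_h = 0` yields, on the
remaining coordinates, the distribution of the OR mixture restricted to the sources
not feeding `x_h` (with the same 1-probabilities). -/
theorem or_mixture_conditional_on_zero
    {Ω : Type*} [MeasurableSpace Ω] (μ : Measure Ω) [IsProbabilityMeasure μ]
    {m n : ℕ} (y : Fin n → Ω → Bool) (hy : ∀ j, Measurable (y j))
    (hind : iIndepFun y μ)
    (hp : ∀ j, 0 < (μ {ω | y j ω = true}).toReal ∧ (μ {ω | y j ω = true}).toReal < 1)
    (G : Fin (m + 1) → Fin n → Bool)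
    (x : Fin (m + 1) → Ω → Bool)
    (hx : ∀ i ω, x i ω = decide (∃ j, G i j = true ∧ y j ω = true))
    (hpos : 0 < (μ {ω | x (Fin.last m) ω = false}).toReal)
    (v : Fin m → Bool) :
    (μ {ω | (∀ i : Fin m, x i.castSucc ω = v i) ∧ x (Fin.last m) ω = false}).toReal
        / (μ {ω | x (Fin.last m) ω = false}).toReal
      = (μ {ω | ∀ i : Fin m,
            decide (∃ j, G i.castSucc j = true ∧ G (Fin.last m) j = false ∧ y j ω = true)
              = v i}).toReal := by

  classical
  set S : Finset (Fin n) := Finset.univ.filter (fun j => G (Fin.last m) j = false) with hS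
  set T : Finset (Fin n) := Finset.univ.filter (fun j => G (Fin.last m) j = true) with hT
  have hdisj : Disjoint S T := by
    simp only [Finset.disjoint_left, hS, hT, Finset.mem_filter, Finset.mem_univ, true_and]
    intro a ha hb
    simp [ha] at hb
  have hIF := hind.indepFun_finset S T hdisj hy
  set fA : Ω → (S → Bool) := fun ω (j : S) => y j ω with hfA
  set fB : Ω → (T → Bool) := fun ω (j : T) => y j ω with hfB
  set MA : Set (S → Bool) :=
    {f | ∀ i : Fin m, decide (∃ j : S, G i.castSucc j = true ∧ f j = true) = v i} with hMA
  set MB : Set (T → Bool) := {f | ∀ j : T, f j = false} with hMB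
  have hMAm : MeasurableSet MA := (Set.toFinite MA).measurableSet
  have hMBm : MeasurableSet MB := (Set.toFinite MB).measurableSet
  -- characterization of the conditioning event
  have hBiff : ∀ ω, x (Fin.last m) ω = false ↔ fB ω ∈ MB := by
    intro ω
    rw [hx]
    simp only [hMB, hfB, Set.mem_setOf_eq, decide_eq_false_iff_not, not_exists, not_and,
      Subtype.forall, hT, Finset.mem_filter, Finset.mem_univ, true_and]
    constructor
    · intro h j hj
      by_contra hc
      exact absurd (h j hj) (by simpa using hc)
    · intro h j hj hyj
      have := h j hj
      simp [hyj] at this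
  have hAiff : ∀ ω, (∀ i : Fin m,
      decide (∃ j, G i.castSucc j = true ∧ G (Fin.last m) j = false ∧ y j ω = true) = v i)
      ↔ fA ω ∈ MA := by
    intro ω
    simp only [hMA, hfA, Set.mem_setOf_eq]
    have key : ∀ i : Fin m,
        (∃ j : S, G i.castSucc j = true ∧ y j ω = true)
        ↔ (∃ j, G i.castSucc j = true ∧ G (Fin.last m) j = false ∧ y j ω = true) := by
      intro i
      constructor
      · rintro ⟨⟨j, hj⟩, h1, h2⟩
        simp only [hS, Finset.mem_filter, Finset.mem_univ, true_and] at hj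
        exact ⟨j, h1, hj, h2⟩
      · rintro ⟨j, h1, h2, h3⟩
        exact ⟨⟨j, by simp [hS, h2]⟩, h1, h3⟩
    constructor <;> intro h i <;> rw [← h i, decide_eq_decide] <;>
      first
        | exact key i
        | exact (key i).symm
  have hNumEq : {ω | (∀ i : Fin m, x i.castSucc ω = v i) ∧ x (Fin.last m) ω = false}
      = fA ⁻¹' MA ∩ fB ⁻¹' MB := by
    ext ω
    simp only [Set.mem_setOf_eq, Set.mem_inter_iff, Set.mem_preimage]
    constructor
    · rintro ⟨h1, h2⟩
      have hB := (hBiff ω).1 h2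
      refine ⟨(hAiff ω).1 ?_, hB⟩
      intro i
      rw [← h1 i, hx, decide_eq_decide]
      constructor
      · rintro ⟨j, hj1, hj2, hj3⟩
        exact ⟨j, hj1, hj3⟩
      · rintro ⟨j, hj1, hj2⟩
        refine ⟨j, hj1, ?_, hj2⟩
        by_contra hc
        have hc' : G (Fin.last m) j = true := by simpa using hc
        have : fB ω ⟨j, by simp [hT, hc']⟩ = false := hB _
        simp only [hfB] at this
        rw [this] at hj2
        exact absurd hj2 (by simp)
    · rintro ⟨h1, h2⟩
      have h2' := (hBiff ω).2 h2
      refine ⟨?_, h2'⟩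
      intro i
      have hA := (hAiff ω).2 h1 i
      rw [← hA, hx, decide_eq_decide]
      constructor
      · rintro ⟨j, hj1, hj2⟩
        refine ⟨j, hj1, ?_, hj2⟩
        by_contra hc
        have hc' : G (Fin.last m) j = true := by simpa using hc
        have : fB ω ⟨j, by simp [hT, hc']⟩ = false := h2 _
        simp only [hfB] at this
        rw [this] at hj2
        exact absurd hj2 (by simp)
      · rintro ⟨j, hj1, hj2, hj3⟩
        exact ⟨j, hj1, hj3⟩
  have hDenEq : {ω | x (Fin.last m) ω = false} = fB ⁻¹' MB := by
    ext ω
    simpa using hBiff ω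
  have hRhsEq : {ω | ∀ i : Fin m,
      decide (∃ j, G i.castSucc j = true ∧ G (Fin.last m) j = false ∧ y j ω = true) = v i}
      = fA ⁻¹' MA := by
    ext ω
    simpa using hAiff ω
  have hmul : μ (fA ⁻¹' MA ∩ fB ⁻¹' MB) = μ (fA ⁻¹' MA) * μ (fB ⁻¹' MB) :=
    hIF.measure_inter_preimage_eq_mul MA MB hMAm hMBm
  rw [hNumEq, hDenEq, hRhsEq, hmul, ENNReal.toReal_mul]
  have hne : (μ (fB ⁻¹' MB)).toReal ≠ 0 := by
    rw [hDenEq] at hpos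
    exact ne_of_gt hpos
  field_simp
end

section
/- Let x = G ⊗ y with mutually independent non-degenerate sources. If x_i and x_k (i ≠ k) are uncorrelated (Cov(x_i,x_k)=0), then there is no index l with g_{il} = 1 and g_{kl} = 1; equivalently, every source contributing to both x_i and x_k would have to have probability 0 of being 1, contradicting non-degeneracy. -/
open MeasureTheory ProbabilityTheory

/-- Lemma 5 of the paper: if two components of an OR mixture of independent
non-degenerate sources are uncorrelated, they share no common source. -/
theorem uncorrelated_no_common_source
    {Ω : Type*} [MeasurableSpace Ω] (μ : Measure Ω) [IsProbabilityMeasure μ]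
    {m n : ℕ} (y : Fin n → Ω → Bool) (hy : ∀ j, Measurable (y j))
    (hind : iIndepFun y μ)
    (hnd : ∀ j, 0 < (μ {ω | y j ω = true}).toReal ∧ (μ {ω | y j ω = true}).toReal < 1)
    (G : Fin m → Fin n → Bool)
    (x : Fin m → Ω → Bool)
    (hx : ∀ i ω, x i ω = decide (∃ j, G i j = true ∧ y j ω = true))
    (i k : Fin m) (hik : i ≠ k)
    (huncorr : (μ {ω | x i ω = true ∧ x k ω = true}).toReal
        = (μ {ω | x i ω = true}).toReal * (μ {ω | x k ω = true}).toReal) :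
    ¬ ∃ l, G i l = true ∧ G k l = true := by
  classical
  rintro ⟨l, hGil, hGkl⟩
  set A : Fin n → Set Ω := fun j => {ω | y j ω = false} with hA
  have hAm : ∀ j, MeasurableSet (A j) := fun j =>
    (hy j) (show MeasurableSet ({false} : Set Bool) from measurableSet_singleton _)
  have hAcomap : ∀ j, MeasurableSet[(inferInstance : MeasurableSpace Bool).comap (y j)] (A j) :=
    fun j => ⟨{false}, measurableSet_singleton _, by ext ω; simp [hA]⟩
  set q : Fin n → ℝ := fun j => (μ (A j)).toReal with hq
  have hAc : ∀ j, A j = {ω | y j ω = true}ᶜ := by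
    intro j; ext ω; simp [hA]
  have hytm : ∀ j, MeasurableSet {ω | y j ω = true} := fun j =>
    (hy j) (show MeasurableSet ({true} : Set Bool) from measurableSet_singleton _)
  have hcompl : ∀ s : Set Ω, MeasurableSet s → (μ sᶜ).toReal = 1 - (μ s).toReal := by
    intro s hs
    rw [prob_compl_eq_one_sub hs, ENNReal.toReal_sub_of_le prob_le_one ENNReal.one_ne_top,
      ENNReal.toReal_one]
  have hq' : ∀ j, q j = 1 - (μ {ω | y j ω = true}).toReal := by
    intro j; rw [hq]; simp only; rw [hAc j, hcompl _ (hytm j)]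
  have hq0 : ∀ j, 0 < q j := fun j => by rw [hq' j]; linarith [(hnd j).2]
  have hq1 : ∀ j, q j < 1 := fun j => by rw [hq' j]; linarith [(hnd j).1]
  set S : Fin m → Finset (Fin n) := fun i' => Finset.univ.filter (fun j => G i' j = true)
    with hS
  -- measure of intersections
  have hmeas : ∀ T : Finset (Fin n), (μ (⋂ j ∈ T, A j)).toReal = ∏ j ∈ T, q j := by
    intro T
    rw [hind.meas_biInter (fun j _ => hAcomap j), ENNReal.toReal_prod]
  -- complements of x-events
  have hxc : ∀ i' : Fin m, {ω | x i' ω = true}ᶜ = ⋂ j ∈ S i', A j := by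
    intro i'
    ext ω
    simp only [Set.mem_compl_iff, Set.mem_setOf_eq, hx i' ω, decide_eq_true_eq,
      Set.mem_iInter, hS, Finset.mem_filter, Finset.mem_univ, true_and, hA,
      Set.mem_setOf_eq]
    constructor
    · intro h j hj
      cases hyj : y j ω
      · rfl
      · exact absurd ⟨j, hj, hyj⟩ h
    · rintro h ⟨j, hj, hyj⟩
      rw [h j hj] at hyj; exact Bool.false_ne_true hyj
  have hxm : ∀ i' : Fin m, MeasurableSet {ω | x i' ω = true} := by
    intro i'
    have : MeasurableSet ({ω | x i' ω = true}ᶜ) := by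
      rw [hxc]
      exact MeasurableSet.biInter (Set.to_countable _) (fun j _ => hAm j)
    simpa using this.compl
  have hPx : ∀ i' : Fin m, (μ {ω | x i' ω = true}).toReal = 1 - ∏ j ∈ S i', q j := by
    intro i'
    have := hcompl _ (hxm i')
    rw [hxc, hmeas] at this
    linarith
  -- the intersection event
  set E := {ω | x i ω = true}
  set F := {ω | x k ω = true}
  have hEF : {ω | x i ω = true ∧ x k ω = true} = E ∩ F := rfl
  have hunion : (μ (E ∪ F)).toReal = 1 - ∏ j ∈ S i ∪ S k, q j := by
    have hc : (E ∪ F)ᶜ = ⋂ j ∈ S i ∪ S k, A j := by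
      rw [Set.compl_union, hxc i, hxc k]
      ext ω
      simp only [Set.mem_inter_iff, Set.mem_iInter, Finset.mem_union]
      constructor
      · rintro ⟨h1, h2⟩ j hj
        cases hj with
        | inl h => exact h1 j h
        | inr h => exact h2 j h
      · intro h
        exact ⟨fun j hj => h j (Or.inl hj), fun j hj => h j (Or.inr hj)⟩
    have h1 := hcompl _ ((hxm i).union (hxm k))
    rw [hc, hmeas] at h1
    linarith
  have hinter : (μ (E ∩ F)).toReal
      = (μ E).toReal + (μ F).toReal - (μ (E ∪ F)).toReal := by
    have h2 : μ (E ∪ F) + μ (E ∩ F) = μ E + μ F :=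
      measure_union_add_inter E (hxm k)
    have hfin : ∀ s : Set Ω, μ s ≠ ⊤ := fun s => measure_ne_top μ s
    have := congrArg ENNReal.toReal h2
    rw [ENNReal.toReal_add (hfin _) (hfin _), ENNReal.toReal_add (hfin _) (hfin _)] at this
    linarith
  set a := ∏ j ∈ S i, q j with ha
  set b := ∏ j ∈ S k, q j with hb
  set c := ∏ j ∈ S i ∪ S k, q j with hc
  set d := ∏ j ∈ S i ∩ S k, q j with hd
  have hcd : c * d = a * b := Finset.prod_union_inter
  have hkey : c = a * b := by
    have h1 : (μ (E ∩ F)).toReal = 1 - a - b + c := by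
      rw [hinter, hunion, hPx i, hPx k]; ring
    rw [hEF, h1, hPx i, hPx k] at huncorr
    nlinarith [huncorr]
  have hcpos : 0 < c := Finset.prod_pos (fun j _ => hq0 j)
  have hd1 : d = 1 := by
    have : c * d = c * 1 := by rw [hcd, ← hkey, mul_one]
    exact mul_left_cancel₀ (ne_of_gt hcpos) this
  -- but d < 1 since l ∈ S i ∩ S k and q l < 1
  have hl : l ∈ S i ∩ S k := by
    simp [hS, Finset.mem_inter, hGil, hGkl]
  have hdlt : d < 1 := by
    rw [hd, ← Finset.mul_prod_erase _ _ hl]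
    calc q l * ∏ j ∈ (S i ∩ S k).erase l, q j
        ≤ q l * 1 := by
          apply mul_le_mul_of_nonneg_left _ (le_of_lt (hq0 l))
          exact Finset.prod_le_one (fun j _ => le_of_lt (hq0 j)) (fun j _ => le_of_lt (hq1 j))
      _ < 1 := by rw [mul_one]; exact hq1 l
  linarith [hd1, hdlt]
end

section
/- Let x = G ⊗ y with mutually independent non-degenerate sources, and suppose x_i and x_k are uncorrelated for some i, k distinct from h. Assume P(x_h = 0) > 0. Then, conditional on the event {x_h = 0}, the random variables x_i and x_k remain uncorrelated. -/
open MeasureTheory ProbabilityTheory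

/-- Lemma 6 of the paper: uncorrelated components of an OR mixture of independent
non-degenerate sources remain uncorrelated after conditioning on `x_h = 0`. -/
theorem uncorrelated_preserved_by_conditioning
    {Ω : Type*} [MeasurableSpace Ω] (μ : Measure Ω) [IsProbabilityMeasure μ]
    {m n : ℕ} (y : Fin n → Ω → Bool) (hy : ∀ j, Measurable (y j))
    (hind : iIndepFun y μ)
    (hnd : ∀ j, 0 < (μ {ω | y j ω = true}).toReal ∧ (μ {ω | y j ω = true}).toReal < 1)
    (G : Fin m → Fin n → Bool)
    (x : Fin m → Ω → Bool)
    (hx : ∀ i ω, x i ω = decide (∃ j, G i j = true ∧ y j ω = true))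
    (i k h : Fin m) (hik : i ≠ k) (hih : i ≠ h) (hkh : k ≠ h)
    (hpos : 0 < (μ {ω | x h ω = false}).toReal)
    (huncorr : (μ {ω | x i ω = true ∧ x k ω = true}).toReal
        = (μ {ω | x i ω = true}).toReal * (μ {ω | x k ω = true}).toReal) :
    (μ {ω | x i ω = true ∧ x k ω = true ∧ x h ω = false}).toReal
        / (μ {ω | x h ω = false}).toReal
      = ((μ {ω | x i ω = true ∧ x h ω = false}).toReal / (μ {ω | x h ω = false}).toReal)
          * ((μ {ω | x k ω = true ∧ x h ω = false}).toReal
              / (μ {ω | x h ω = false}).toReal) := by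
  classical
  -- notation
  set q : Fin n → ℝ := fun j => (μ {ω | y j ω = false}).toReal with hqdef
  have hms : ∀ (j : Fin n) (b : Bool), MeasurableSet {ω | y j ω = b} :=
    fun j b => hy j (measurableSet_singleton b)
  -- splitting a set by a measurable set
  have split : ∀ (s t : Set Ω), MeasurableSet t →
      (μ s).toReal = (μ (s ∩ t)).toReal + (μ (s ∩ tᶜ)).toReal := by
    intro s t ht
    rw [← ENNReal.toReal_add (measure_ne_top μ _) (measure_ne_top μ _)]
    congr 1
    rw [← Set.diff_eq]
    exact (measure_inter_add_diff s ht).symm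
  have runiv : (μ (Set.univ : Set Ω)).toReal = 1 := by simp
  -- inclusion-exclusion
  have ie : ∀ (s t u : Set Ω), MeasurableSet t → MeasurableSet u →
      (μ (s ∩ (tᶜ ∩ uᶜ))).toReal
        = (μ s).toReal - (μ (s ∩ t)).toReal - (μ (s ∩ u)).toReal
            + (μ (s ∩ (t ∩ u))).toReal := by
    intro s t u ht hu
    have h1 := split s t ht
    have h2 := split (s ∩ tᶜ) u hu
    have h3 := split (s ∩ u) t ht
    have e1 : (s ∩ tᶜ) ∩ u = (s ∩ u) ∩ tᶜ := by
      ext ω; simp only [Set.mem_inter_iff, Set.mem_compl_iff]; tauto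
    have e2 : (s ∩ u) ∩ t = s ∩ (t ∩ u) := by
      ext ω; simp only [Set.mem_inter_iff]; tauto
    have e3 : (s ∩ tᶜ) ∩ uᶜ = s ∩ (tᶜ ∩ uᶜ) := by
      ext ω; simp only [Set.mem_inter_iff, Set.mem_compl_iff]; tauto
    rw [e1, e3] at h2
    rw [e2] at h3
    linarith
  -- probabilities of joint zero events are products
  have key : ∀ T : Finset (Fin n),
      (μ (⋂ j ∈ T, {ω | y j ω = false})).toReal = ∏ j ∈ T, q j := by
    intro T
    rw [hind.meas_biInter (s := fun j => {ω | y j ω = false})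
      (fun j _ => ⟨{false}, measurableSet_singleton false, rfl⟩), ENNReal.toReal_prod]
  -- supports
  set S : Fin m → Finset (Fin n) := fun l => Finset.univ.filter (fun j => G l j = true)
    with hS
  have hF : ∀ l : Fin m, {ω | x l ω = false} = ⋂ j ∈ S l, {ω | y j ω = false} := by
    intro l
    ext ω
    simp only [Set.mem_setOf_eq, Set.mem_iInter, hS, Finset.mem_filter, Finset.mem_univ,
      true_and, hx, decide_eq_false_iff_not, not_exists, not_and, Bool.not_eq_true]
  have mF : ∀ l, MeasurableSet {ω | x l ω = false} := by
    intro l; rw [hF l]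
    exact Finset.measurableSet_biInter _ (fun j _ => hms j false)
  have rF : ∀ l, (μ {ω | x l ω = false}).toReal = ∏ j ∈ S l, q j := by
    intro l; rw [hF l, key]
  have rF2 : ∀ l l' : Fin m,
      (μ ({ω | x l ω = false} ∩ {ω | x l' ω = false})).toReal = ∏ j ∈ S l ∪ S l', q j := by
    intro l l'
    rw [hF l, hF l', ← Finset.set_biInter_inter, key]
  have rF3 : (μ ({ω | x h ω = false} ∩ ({ω | x i ω = false} ∩ {ω | x k ω = false}))).toReal
      = ∏ j ∈ S h ∪ (S i ∪ S k), q j := by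
    rw [hF h, hF i, hF k, ← Finset.set_biInter_inter, ← Finset.set_biInter_inter, key]
  -- q j ∈ (0,1)
  have hq01 : ∀ j, 0 < q j ∧ q j < 1 := by
    intro j
    have h1 := split Set.univ {ω | y j ω = true} (hms j true)
    rw [Set.univ_inter, Set.univ_inter, runiv] at h1
    have h2 : {ω | y j ω = true}ᶜ = {ω | y j ω = false} := by
      ext ω; simp
    rw [h2] at h1
    obtain ⟨a, b⟩ := hnd j
    simp only [hqdef]
    constructor <;> linarith
  have hqprodpos : ∀ T : Finset (Fin n), 0 < ∏ j ∈ T, q j :=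
    fun T => Finset.prod_pos (fun j _ => (hq01 j).1)
  -- translate huncorr into products
  have etrue : ∀ l : Fin m, {ω | x l ω = true} = {ω | x l ω = false}ᶜ := by
    intro l; ext ω; simp
  have h11 : (μ {ω | x i ω = true ∧ x k ω = true}).toReal
      = 1 - (∏ j ∈ S i, q j) - (∏ j ∈ S k, q j) + ∏ j ∈ S i ∪ S k, q j := by
    have hie := ie Set.univ _ _ (mF i) (mF k)
    simp only [Set.univ_inter] at hie
    rw [runiv, rF, rF, rF2] at hie
    have eset : {ω | x i ω = true ∧ x k ω = true}
        = {ω | x i ω = false}ᶜ ∩ {ω | x k ω = false}ᶜ := by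
      ext ω
      simp only [Set.mem_setOf_eq, Set.mem_inter_iff, Set.mem_compl_iff, Bool.not_eq_false]
    rw [eset, hie]
  have h1i : (μ {ω | x i ω = true}).toReal = 1 - ∏ j ∈ S i, q j := by
    have hs := split Set.univ {ω | x i ω = false} (mF i)
    simp only [Set.univ_inter] at hs
    rw [runiv, rF] at hs
    rw [etrue i]; linarith
  have h1k : (μ {ω | x k ω = true}).toReal = 1 - ∏ j ∈ S k, q j := by
    have hs := split Set.univ {ω | x k ω = false} (mF k)
    simp only [Set.univ_inter] at hs
    rw [runiv, rF] at hs
    rw [etrue k]; linarith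
  rw [h11, h1i, h1k] at huncorr
  have hQik : (∏ j ∈ S i ∪ S k, q j) = (∏ j ∈ S i, q j) * ∏ j ∈ S k, q j := by
    linear_combination huncorr
  -- supports are disjoint
  have hdisj : S i ∩ S k = ∅ := by
    by_contra hne
    obtain ⟨j0, hj0⟩ := Finset.nonempty_iff_ne_empty.mpr hne
    have hQ1 : (∏ j ∈ S i ∩ S k, q j) = 1 := by
      have hui := Finset.prod_union_inter (s₁ := S i) (s₂ := S k) (f := q)
      rw [hQik] at hui
      have := hqprodpos (S i)
      have := hqprodpos (S k)
      have hprodpos : (0:ℝ) < (∏ j ∈ S i, q j) * ∏ j ∈ S k, q j := by positivity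
      have h' : ((∏ j ∈ S i, q j) * ∏ j ∈ S k, q j) * (∏ j ∈ S i ∩ S k, q j)
          = ((∏ j ∈ S i, q j) * ∏ j ∈ S k, q j) * 1 := by rw [mul_one]; exact hui
      exact mul_left_cancel₀ (ne_of_gt hprodpos) h'
    have hsplit := Finset.mul_prod_erase (S i ∩ S k) q hj0
    have hle : (∏ j ∈ (S i ∩ S k).erase j0, q j) ≤ 1 :=
      Finset.prod_le_one (fun j _ => le_of_lt (hq01 j).1) (fun j _ => le_of_lt (hq01 j).2)
    have hpos0 := (hq01 j0).1
    have hlt1 := (hq01 j0).2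
    have hposerase := hqprodpos ((S i ∩ S k).erase j0)
    nlinarith
  -- key identity for conditioning
  have hu1 : (S h ∪ S i) ∪ (S h ∪ S k) = S h ∪ (S i ∪ S k) := by
    ext j
    simp only [Finset.mem_union]
    tauto
  have hu2 : (S h ∪ S i) ∩ (S h ∪ S k) = S h := by
    have hd : ∀ j, ¬(j ∈ S i ∧ j ∈ S k) := by
      intro j hj
      have : j ∈ S i ∩ S k := Finset.mem_inter.mpr hj
      rw [hdisj] at this
      exact absurd this (Finset.notMem_empty j)
    ext j
    have := hd j
    simp only [Finset.mem_inter, Finset.mem_union]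
    tauto
  have hkey : (∏ j ∈ S h ∪ (S i ∪ S k), q j) * (∏ j ∈ S h, q j)
      = (∏ j ∈ S h ∪ S i, q j) * ∏ j ∈ S h ∪ S k, q j := by
    have := Finset.prod_union_inter (s₁ := S h ∪ S i) (s₂ := S h ∪ S k) (f := q)
    rw [hu1, hu2] at this
    exact this
  -- rewrite the goal
  have eC : (μ {ω | x h ω = false}).toReal = ∏ j ∈ S h, q j := rF h
  have e3 : (μ {ω | x i ω = true ∧ x k ω = true ∧ x h ω = false}).toReal
      = (∏ j ∈ S h, q j) - (∏ j ∈ S h ∪ S i, q j) - (∏ j ∈ S h ∪ S k, q j)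
          + ∏ j ∈ S h ∪ (S i ∪ S k), q j := by
    have hie := ie {ω | x h ω = false} _ _ (mF i) (mF k)
    rw [rF h, rF2 h i, rF2 h k, rF3] at hie
    have eset : {ω | x i ω = true ∧ x k ω = true ∧ x h ω = false}
        = {ω | x h ω = false} ∩ ({ω | x i ω = false}ᶜ ∩ {ω | x k ω = false}ᶜ) := by
      ext ω
      simp only [Set.mem_setOf_eq, Set.mem_inter_iff, Set.mem_compl_iff, Bool.not_eq_false]
      tauto
    rw [eset, hie]
  have e1 : (μ {ω | x i ω = true ∧ x h ω = false}).toReal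
      = (∏ j ∈ S h, q j) - ∏ j ∈ S h ∪ S i, q j := by
    have hs := split {ω | x h ω = false} {ω | x i ω = false} (mF i)
    rw [rF h, rF2 h i] at hs
    have eset : {ω | x i ω = true ∧ x h ω = false}
        = {ω | x h ω = false} ∩ {ω | x i ω = false}ᶜ := by
      ext ω
      simp only [Set.mem_setOf_eq, Set.mem_inter_iff, Set.mem_compl_iff, Bool.not_eq_false]
      tauto
    rw [eset]; linarith
  have e2 : (μ {ω | x k ω = true ∧ x h ω = false}).toReal
      = (∏ j ∈ S h, q j) - ∏ j ∈ S h ∪ S k, q j := by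
    have hs := split {ω | x h ω = false} {ω | x k ω = false} (mF k)
    rw [rF h, rF2 h k] at hs
    have eset : {ω | x k ω = true ∧ x h ω = false}
        = {ω | x h ω = false} ∩ {ω | x k ω = false}ᶜ := by
      ext ω
      simp only [Set.mem_setOf_eq, Set.mem_inter_iff, Set.mem_compl_iff, Bool.not_eq_false]
      tauto
    rw [eset]; linarith
  rw [e1, e2, e3, eC]
  have hQH : (0:ℝ) < ∏ j ∈ S h, q j := hqprodpos (S h)
  field_simp
  ring_nf
  nlinarith [hkey]
end
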